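/- For all real numbers p, q, r, s, the system −6q + 5p² − 2q² = −6s + 5r² − 2s², 7q + 10p² − q² = 7s + 10r² − s², p² + q² = 1, r² + s² = 1, together with (p,q) ≠ (r,s), holds if and only if r = −p, s = q, p² + q² = 1 and p ≠ 0. In particular, the system has infinitely many solutions (p,q,r,s). -/
import Mathlib


/-- The closing-equation system for `X = (-6 - 4y, -10x)`, `Y = (7 - 2y, -20x)`. -/
def closingSys18 (p q r s : ℝ) : Prop :=
  -6 * q + 5 * p ^ 2 - 2 * q ^ 2 = -6 * s + 5 * r ^ 2 - 2 * s ^ 2 ∧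
    7 * q + 10 * p ^ 2 - q ^ 2 = 7 * s + 10 * r ^ 2 - s ^ 2 ∧
    p ^ 2 + q ^ 2 = 1 ∧ r ^ 2 + s ^ 2 = 1 ∧ (p, q) ≠ (r, s)

lemma closingSys18_iff (p q r s : ℝ) :
    closingSys18 p q r s ↔ (r = -p ∧ s = q ∧ p ^ 2 + q ^ 2 = 1 ∧ p ≠ 0) := by
  constructor
  · rintro ⟨h1, h2, h3, h4, h5⟩
    have hq : q = s := by nlinarith [h1, h2, h3, h4]
    subst hq
    have hp2 : p ^ 2 = r ^ 2 := by nlinarith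
    have hpr : p ≠ r := fun h => h5 (by rw [h])
    have hr : r = -p := by
      have : (p - r) * (p + r) = 0 := by nlinarith
      rcases mul_eq_zero.1 this with h | h
      · exact absurd (by linarith) hpr
      · linarith
    refine ⟨hr, rfl, h3, fun hp0 => hpr ?_⟩
    rw [hp0, hr, hp0]; ring
  · rintro ⟨hr, hs, h3, hp⟩
    subst hr; subst hs
    refine ⟨by ring, by ring, h3, by linarith [h3], fun h => hp ?_⟩
    have := (Prod.ext_iff.1 h).1
    simp only at this
    linarith

/-- The system holds iff `r = -p`, `s = q`, `p² + q² = 1` and `p ≠ 0`; in particular it has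
infinitely many solutions. -/
theorem closingSys18_iff_and_infinite :
    (∀ p q r s : ℝ,
      closingSys18 p q r s ↔ (r = -p ∧ s = q ∧ p ^ 2 + q ^ 2 = 1 ∧ p ≠ 0)) ∧
    {x : ℝ × ℝ × ℝ × ℝ | closingSys18 x.1 x.2.1 x.2.2.1 x.2.2.2}.Infinite := by
  refine ⟨closingSys18_iff, ?_⟩
  have h : Set.InjOn (fun t : ℝ => (t, Real.sqrt (1 - t ^ 2), -t, Real.sqrt (1 - t ^ 2)))
      (Set.Ioo 0 1) := fun a _ b _ hab => (Prod.ext_iff.1 hab).1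
  have himg := (Set.Ioo_infinite (show (0:ℝ) < 1 by norm_num)).image h
  refine himg.mono ?_
  rintro ⟨p, q, r, s⟩ ⟨t, ⟨ht0, ht1⟩, heq⟩
  simp only [Prod.mk.injEq] at heq
  obtain ⟨h1, h2, h3, h4⟩ := heq
  subst h1; subst h2; subst h3; subst h4
  have hsq : Real.sqrt (1 - t ^ 2) ^ 2 = 1 - t ^ 2 :=
    Real.sq_sqrt (by nlinarith)
  simp only [Set.mem_setOf_eq]
  exact (closingSys18_iff _ _ _ _).2 ⟨rfl, rfl, by linarith, ne_of_gt ht0⟩
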